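/- Let μ ∈ ℝ and λ ∈ ℂ with 2iλ ≠ μ. For every t ∈ ℝ, the time-deformed spinor field ψ_t(x,y) := exp(λ(y − ix))·(2iλ + μ·tanh(μx − μ³t))/(2iλ − μ) and φ_t(x,y) := μ·exp(λ(y − ix))·sech(μx − μ³t)/(2iλ − μ) satisfies the two-dimensional Dirac equation ∂ψ_t = p_t·φ_t and ∂̄φ_t = −p_t·ψ_t with the real-valued potential p_t(x,y) := (μ/2)·sech(μx − μ³t). -/

import Mathlib

/-!
The factor `exp (λ(y − ix)) = exp (−iλ(x + iy))` is holomorphic, so the operator `∂` of the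
Dirac system (which is the usual `∂/∂z̄`) kills it and `∂̄` multiplies it by `−iλ`. For fields
of the form `exp (λ(y − ix)) · g(x)` the system thus reduces to ODEs in `x`, which hold for the
profiles `tanh (μx − μ³t)` and `sech (μx − μ³t)` because `tanh' = sech²` and
`sech' = −tanh · sech`.
-/

open Complex

/-- `del f = (1/2)(∂ₓf + i ∂_y f)`, the paper's `∂` (the usual `∂/∂z̄`). -/
noncomputable def del (f : ℝ → ℝ → ℂ) (x y : ℝ) : ℂ :=
  (1 / 2 : ℂ) * (deriv (fun x' : ℝ => f x' y) x + I * deriv (fun y' : ℝ => f x y') y)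

noncomputable def delBar (f : ℝ → ℝ → ℂ) (x y : ℝ) : ℂ :=
  (1 / 2 : ℂ) * (deriv (fun x' : ℝ => f x' y) x - I * deriv (fun y' : ℝ => f x y') y)

noncomputable def planeWave (l : ℂ) (x y : ℝ) : ℂ :=
  exp (l * ((y : ℂ) - I * (x : ℂ)))

theorem hasDerivAt_planeWave_left (l : ℂ) (x y : ℝ) :
    HasDerivAt (fun x' : ℝ => planeWave l x' y) (planeWave l x y * (l * -I)) x := by
  have h := ((((hasDerivAt_id x).ofReal_comp).const_mul I).const_sub (y : ℂ)).const_mul l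
  simpa [planeWave] using h.cexp

theorem hasDerivAt_planeWave_right (l : ℂ) (x y : ℝ) :
    HasDerivAt (fun y' : ℝ => planeWave l x y') (planeWave l x y * l) y := by
  have h := (((hasDerivAt_id y).ofReal_comp).sub_const (I * (x : ℂ))).const_mul l
  simpa [planeWave] using h.cexp

section PlaneWave

variable {l : ℂ} {f : ℝ → ℝ → ℂ} {g : ℝ → ℂ} {g' : ℂ} {x : ℝ}

theorem hasDerivAt_planeWave_mul_left (hf : ∀ x y, f x y = planeWave l x y * g x)
    (hg : HasDerivAt g g' x) (y : ℝ) :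
    HasDerivAt (fun x' : ℝ => f x' y)
      (planeWave l x y * (l * -I) * g x + planeWave l x y * g') x := by
  simp only [hf]
  exact (hasDerivAt_planeWave_left l x y).mul hg

theorem hasDerivAt_planeWave_mul_right (hf : ∀ x y, f x y = planeWave l x y * g x) (y : ℝ) :
    HasDerivAt (fun y' : ℝ => f x y') (planeWave l x y * l * g x) y := by
  simp only [hf]
  exact (hasDerivAt_planeWave_right l x y).mul_const (g x)

theorem del_planeWave_mul (hf : ∀ x y, f x y = planeWave l x y * g x)
    (hg : HasDerivAt g g' x) (y : ℝ) :
    del f x y = planeWave l x y * g' / 2 := by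
  rw [del, (hasDerivAt_planeWave_mul_left hf hg y).deriv,
    (hasDerivAt_planeWave_mul_right hf y).deriv]
  ring

theorem delBar_planeWave_mul (hf : ∀ x y, f x y = planeWave l x y * g x)
    (hg : HasDerivAt g g' x) (y : ℝ) :
    delBar f x y = planeWave l x y * (g' / 2 - I * l * g x) := by
  rw [delBar, (hasDerivAt_planeWave_mul_left hf hg y).deriv,
    (hasDerivAt_planeWave_mul_right hf y).deriv]
  ring

end PlaneWave

theorem Real.hasDerivAt_tanh (x : ℝ) :
    HasDerivAt Real.tanh (1 / Real.cosh x * (1 / Real.cosh x)) x := by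
  have hc : Real.cosh x ≠ 0 := (Real.cosh_pos x).ne'
  rw [show Real.tanh = fun x => Real.sinh x / Real.cosh x from
    funext Real.tanh_eq_sinh_div_cosh]
  refine ((Real.hasDerivAt_sinh x).div (Real.hasDerivAt_cosh x) hc).congr_deriv ?_
  field_simp
  linear_combination Real.cosh_sq_sub_sinh_sq x

theorem Real.hasDerivAt_one_div_cosh (x : ℝ) :
    HasDerivAt (fun x => 1 / Real.cosh x) (-(Real.tanh x * (1 / Real.cosh x))) x := by
  have hc : Real.cosh x ≠ 0 := (Real.cosh_pos x).ne'
  refine ((hasDerivAt_const x (1 : ℝ)).div (Real.hasDerivAt_cosh x) hc).congr_deriv ?_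
  rw [Real.tanh_eq_sinh_div_cosh]
  field_simp
  ring

theorem deformed_one_soliton_spinor_field_solves_dirac_general
    (μ : ℝ) (l : ℂ) :
    ∀ t : ℝ,
    let ψ : ℝ → ℝ → ℂ := fun x y => Complex.exp (l * ((y : ℂ) - Complex.I * (x : ℂ)))
      * (2 * Complex.I * l + (μ : ℂ) * (Real.tanh (μ * x - μ ^ 3 * t) : ℂ))
      / (2 * Complex.I * l - (μ : ℂ))
    let φ : ℝ → ℝ → ℂ := fun x y => (μ : ℂ) * Complex.exp (l * ((y : ℂ) - Complex.I * (x : ℂ)))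
      * ((1 / Real.cosh (μ * x - μ ^ 3 * t) : ℝ) : ℂ) / (2 * Complex.I * l - (μ : ℂ))
    ∀ x y : ℝ,
      ((1 / 2 : ℂ) * (deriv (fun x' : ℝ => ψ x' y) x + Complex.I * deriv (fun y' : ℝ => ψ x y') y)
        = ((μ / 2 * (1 / Real.cosh (μ * x - μ ^ 3 * t)) : ℝ) : ℂ) * φ x y)
      ∧ ((1 / 2 : ℂ) * (deriv (fun x' : ℝ => φ x' y) x - Complex.I * deriv (fun y' : ℝ => φ x y') y)
        = -(((μ / 2 * (1 / Real.cosh (μ * x - μ ^ 3 * t)) : ℝ) : ℂ) * ψ x y)) := by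
  intro t ψ φ x y
  have hphase : HasDerivAt (fun x' : ℝ => μ * x' - μ ^ 3 * t) μ x := by
    simpa using ((hasDerivAt_id x).const_mul μ).sub_const (μ ^ 3 * t)
  have hψ := ((((Real.hasDerivAt_tanh _).comp x hphase).ofReal_comp.const_mul
    (μ : ℂ)).const_add (2 * I * l)).div_const (2 * I * l - (μ : ℂ))
  have hφ := (((Real.hasDerivAt_one_div_cosh _).comp x hphase).ofReal_comp.const_mul
    (μ : ℂ)).div_const (2 * I * l - (μ : ℂ))
  change del ψ x y = _ ∧ delBar φ x y = _
  rw [del_planeWave_mul (l := l)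
      (fun x y => by simp only [ψ, planeWave, Function.comp]; ring) hψ,
    delBar_planeWave_mul (l := l)
      (fun x y => by simp only [φ, planeWave, Function.comp]; ring) hφ]
  simp only [φ, ψ, planeWave, Function.comp]
  push_cast
  constructor <;> ring

/-- For `μ ∈ ℝ`, `λ ∈ ℂ` with `2iλ ≠ μ`, and every deformation time `t ∈ ℝ`,
the time-deformed one-soliton spinor field
`ψ_t(x,y) = exp(λ(y − ix))·(2iλ + μ·tanh(μx − μ³t))/(2iλ − μ)`,
`φ_t(x,y) = μ·exp(λ(y − ix))·sech(μx − μ³t)/(2iλ − μ)` satisfies the two-dimensional Dirac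
equation `∂ψ_t = p_t·φ_t`, `∂̄φ_t = −p_t·ψ_t` with real potential
`p_t(x,y) = (μ/2)·sech(μx − μ³t)`, where `∂f := (1/2)(∂f/∂x + i·∂f/∂y)` and
`∂̄f := (1/2)(∂f/∂x − i·∂f/∂y)`. -/
theorem deformed_one_soliton_spinor_field_solves_dirac
    (μ : ℝ) (l : ℂ) (h : 2 * Complex.I * l ≠ (μ : ℂ)) :
    ∀ t : ℝ,
    let ψ : ℝ → ℝ → ℂ := fun x y => Complex.exp (l * ((y : ℂ) - Complex.I * (x : ℂ)))
      * (2 * Complex.I * l + (μ : ℂ) * (Real.tanh (μ * x - μ ^ 3 * t) : ℂ))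
      / (2 * Complex.I * l - (μ : ℂ))
    let φ : ℝ → ℝ → ℂ := fun x y => (μ : ℂ) * Complex.exp (l * ((y : ℂ) - Complex.I * (x : ℂ)))
      * ((1 / Real.cosh (μ * x - μ ^ 3 * t) : ℝ) : ℂ) / (2 * Complex.I * l - (μ : ℂ))
    ∀ x y : ℝ,
      ((1 / 2 : ℂ) * (deriv (fun x' : ℝ => ψ x' y) x + Complex.I * deriv (fun y' : ℝ => ψ x y') y)
        = ((μ / 2 * (1 / Real.cosh (μ * x - μ ^ 3 * t)) : ℝ) : ℂ) * φ x y)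
      ∧ ((1 / 2 : ℂ) * (deriv (fun x' : ℝ => φ x' y) x - Complex.I * deriv (fun y' : ℝ => φ x y') y)
        = -(((μ / 2 * (1 / Real.cosh (μ * x - μ ^ 3 * t)) : ℝ) : ℂ) * ψ x y)) :=
  deformed_one_soliton_spinor_field_solves_dirac_general μ l
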